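/- arXiv:1305.2428 — 2 statements merged into one kernel-verified Lean document; each statement's English description precedes it below -/
import Mathlib

section
/- For every integer N ≥ 1, ∑_{k | N, k > 0} (N/k) · φ((k, N/k)) / (k, N/k) = ψ(N), where ψ(N) = N ∏_{p | N} (1 + 1/p) is the Dedekind psi function, φ is Euler's totient function, and (a,b) denotes gcd. -/
/-!
Both sides are multiplicative in `N`: along a coprime factorization `N = N₁ N₂` the divisors
`k ∣ N` split as `k = k₁ k₂`, and the summand splits accordingly. At `N = p ^ (e + 1)` the term
`k = 1` is `p ^ (e + 1)`, while for `p ∣ k` the numbers `gcd(k, N/k)` and `N/k` have the same prime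
factors, which makes the term equal to `φ(N/k)`; these terms add up to `∑_{d ∣ p^e} φ(d) = p^e`.
-/

noncomputable def dedekindPsi (N : ℕ) : ℚ :=
  N * ∏ p ∈ N.primeFactors, (1 + 1 / (p : ℚ))

open Finset ArithmeticFunction
open scoped Nat

namespace Nat

theorem div_mul_totient_of_primeFactors_eq {g m : ℕ} (hgm : g ∣ m)
    (h : g.primeFactors = m.primeFactors) : m / g * φ g = φ m := by
  have hP : 0 < ∏ p ∈ m.primeFactors, p := prod_pos fun p hp => pos_of_mem_primeFactors hp
  refine Nat.eq_of_mul_eq_mul_right hP ?_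
  rw [mul_assoc, ← h, totient_mul_prod_primeFactors, ← mul_assoc, Nat.div_mul_cancel hgm, h,
    totient_mul_prod_primeFactors]

theorem Coprime.sum_divisors_mul_eq {R : Type*} [CommSemiring R] {f : ℕ → ℕ → R}
    (hf : ∀ {a₁ a₂ b₁ b₂ : ℕ}, (a₁ * a₂).Coprime (b₁ * b₂) →
      f (a₁ * b₁) (a₂ * b₂) = f a₁ a₂ * f b₁ b₂)
    {m n : ℕ} (hmn : m.Coprime n) :
    ∑ d ∈ (m * n).divisors, f d (m * n / d) =
      (∑ d ∈ m.divisors, f d (m / d)) * ∑ d ∈ n.divisors, f d (n / d) := by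
  rw [hmn.divisors_mul, sum_map, sum_mul_sum, ← sum_product',
    ← sum_attach (m.divisors ×ˢ n.divisors)]
  refine sum_congr rfl fun ⟨⟨a, b⟩, hab⟩ _ => ?_
  obtain ⟨ha, hb⟩ := mem_product.1 hab
  replace ha := dvd_of_mem_divisors ha
  replace hb := dvd_of_mem_divisors hb
  change f (a * b) (m * n / (a * b)) = _
  rw [← Nat.div_mul_div_comm ha hb]
  apply hf
  rwa [Nat.mul_div_cancel' ha, Nat.mul_div_cancel' hb]

end Nat

/-- For `k ∣ N`, the curve `X₀(N)` has `φ(g)` cusps of denominator `k`, where `g = gcd(k, N/k)`,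
each of width `N / (k g)`; `cuspTerm k (N / k)` is their total width. -/
def cuspTerm (k m : ℕ) : ℕ := m / k.gcd m * φ (k.gcd m)

theorem cuspTerm_mul {a₁ a₂ b₁ b₂ : ℕ} (h : (a₁ * a₂).Coprime (b₁ * b₂)) :
    cuspTerm (a₁ * b₁) (a₂ * b₂) = cuspTerm a₁ a₂ * cuspTerm b₁ b₂ := by
  have h₁ : a₁.Coprime b₁ := h.coprime_mul_right.coprime_mul_right_right
  have h₂ : a₂.Coprime b₂ := h.coprime_mul_left.coprime_mul_left_right
  have hgcd : (a₁ * b₁).gcd (a₂ * b₂) = a₁.gcd a₂ * b₁.gcd b₂ := by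
    rw [Nat.Coprime.gcd_mul _ h₂,
      Nat.Coprime.gcd_mul_right_cancel a₁ h.coprime_mul_left.coprime_mul_right_right.symm,
      Nat.Coprime.gcd_mul_left_cancel b₁ h.coprime_mul_right.coprime_mul_left_right]
  rw [cuspTerm, cuspTerm, cuspTerm, hgcd,
    Nat.totient_mul (h₁.of_dvd (Nat.gcd_dvd_left _ _) (Nat.gcd_dvd_left _ _)),
    ← Nat.div_mul_div_comm (Nat.gcd_dvd_right a₁ a₂) (Nat.gcd_dvd_right b₁ b₂)]
  ring

theorem cuspTerm_eq_totient {k m : ℕ} (hk : k ≠ 0) (hm : m ≠ 0)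
    (h : m.primeFactors ⊆ k.primeFactors) : cuspTerm k m = φ m :=
  Nat.div_mul_totient_of_primeFactors_eq (Nat.gcd_dvd_right k m)
    (by rw [Nat.primeFactors_gcd hk hm, inter_eq_right.2 h])

def cuspWidthSum : ArithmeticFunction ℕ :=
  ⟨fun N => ∑ k ∈ N.divisors, cuspTerm k (N / k), by simp⟩

theorem cuspWidthSum_apply (N : ℕ) :
    cuspWidthSum N = ∑ k ∈ N.divisors, cuspTerm k (N / k) :=
  rfl

theorem isMultiplicative_cuspWidthSum : IsMultiplicative cuspWidthSum :=
  ⟨by simp [cuspWidthSum_apply, cuspTerm], fun hmn => hmn.sum_divisors_mul_eq cuspTerm_mul⟩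

theorem cuspWidthSum_prime_pow_succ {p : ℕ} (hp : p.Prime) (e : ℕ) :
    cuspWidthSum (p ^ (e + 1)) = p ^ (e + 1) + p ^ e := by
  have hterm : ∀ i ∈ range (e + 1),
      cuspTerm (p ^ (i + 1)) (p ^ (e + 1) / p ^ (i + 1)) = φ (p ^ (e - i)) := by
    intro i hi
    rw [Nat.pow_div (by simpa [Nat.lt_succ_iff] using hi) hp.pos, Nat.add_sub_add_right]
    refine cuspTerm_eq_totient (pow_ne_zero _ hp.ne_zero) (pow_ne_zero _ hp.ne_zero) ?_
    calc (p ^ (e - i)).primeFactors ⊆ (p ^ (e - i + 1)).primeFactors :=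
          Nat.primeFactors_mono (pow_dvd_pow p (Nat.le_succ _)) (pow_ne_zero _ hp.ne_zero)
      _ = (p ^ (i + 1)).primeFactors := by
          rw [Nat.primeFactors_pow_succ, Nat.primeFactors_pow_succ]
  have hreflect := sum_range_reflect (fun j => φ (p ^ j)) (e + 1)
  rw [add_tsub_cancel_right] at hreflect
  rw [cuspWidthSum_apply, Nat.sum_divisors_prime_pow hp, sum_range_succ', sum_congr rfl hterm,
    hreflect, ← Nat.sum_divisors_prime_pow hp, Nat.sum_totient]
  simp [cuspTerm, add_comm]

theorem dedekindPsi_eq_pmul (n : ℕ) :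
    dedekindPsi n = (ArithmeticFunction.id : ArithmeticFunction ℚ).pmul
      (prodPrimeFactors fun p => 1 + 1 / (p : ℚ)) n := by
  rcases eq_or_ne n 0 with rfl | hn
  · simp [dedekindPsi]
  · rw [pmul_apply, natCoe_apply, id_apply, prodPrimeFactors_apply hn, dedekindPsi]

theorem dedekindPsi_prime_pow_succ {p : ℕ} (hp : p.Prime) (e : ℕ) :
    dedekindPsi (p ^ (e + 1)) = p ^ (e + 1) + p ^ e := by
  have hp₀ : (p : ℚ) ≠ 0 := Nat.cast_ne_zero.2 hp.ne_zero
  rw [dedekindPsi, Nat.primeFactors_prime_pow e.succ_ne_zero hp, prod_singleton]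
  field_simp
  push_cast
  ring

theorem cuspWidthSum_eq_dedekindPsi (N : ℕ) : (cuspWidthSum N : ℚ) = dedekindPsi N := by
  have hψ := isMultiplicative_id.natCast.pmul
    (IsMultiplicative.prodPrimeFactors fun p => 1 + 1 / (p : ℚ))
  have key := (IsMultiplicative.eq_iff_eq_on_prime_powers _
    isMultiplicative_cuspWidthSum.natCast _ hψ).2 fun p i hp => by
      rw [natCoe_apply, ← dedekindPsi_eq_pmul]
      rcases i with _ | e
      · simp [isMultiplicative_cuspWidthSum.map_one, dedekindPsi]
      · rw [cuspWidthSum_prime_pow_succ hp, dedekindPsi_prime_pow_succ hp]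
        norm_cast
  rw [← natCoe_apply, key, dedekindPsi_eq_pmul]

theorem sum_divisors_eq_dedekindPsi_general (N : ℕ) :
    ((∑ k ∈ N.divisors, (N / (k * Nat.gcd k (N / k))) * Nat.totient (Nat.gcd k (N / k)) : ℕ) : ℚ)
      = dedekindPsi N := by
  simp_rw [← cuspWidthSum_eq_dedekindPsi, cuspWidthSum_apply, cuspTerm, Nat.div_div_eq_div_mul]

/-- `∑_{k ∣ N} (N/k) · φ((k, N/k)) / (k, N/k) = ψ(N)`. -/
theorem sum_divisors_eq_dedekindPsi (N : ℕ) (hN : 1 ≤ N) :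
    ((∑ k ∈ N.divisors, (N / (k * Nat.gcd k (N / k))) * Nat.totient (Nat.gcd k (N / k)) : ℕ) : ℚ)
      = dedekindPsi N :=
  sum_divisors_eq_dedekindPsi_general N
end

section
/- The number of inequivalent cusps of Γ0(N) equals ∑_{d | N, d > 0} φ(gcd(d, N/d)), where φ is Euler's totient function. -/
/-- Cusps of `Γ₀(N)` are `Γ₀(N)`-orbits of primitive vectors `(p, q) ∈ ℤ²`
(this is the same as orbits on `ℙ¹(ℚ) = ℚ ∪ {∞}` since `-1 ∈ Γ₀(N)`). -/
def cuspRel (N : ℕ) (v w : {v : ℤ × ℤ // IsCoprime v.1 v.2}) : Prop :=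
  ∃ γ ∈ CongruenceSubgroup.Gamma0 N,
    ((γ : Matrix.SpecialLinearGroup (Fin 2) ℤ) : Matrix (Fin 2) (Fin 2) ℤ).mulVec
        ![v.1.1, v.1.2] = ![w.1.1, w.1.2]

/-!
A primitive vector `(a, c)` carries two `Γ₀(N)`-invariants: the divisor `d = gcd(c, N)` of `N`, and
the class of `a · (c / d)` in `(ℤ / gcd(d, N/d))ˣ`. Conversely, `Γ₀(N)` moves `(a, c)` to a vector
`(b, d)`, and `(b₁, d)`, `(b₂, d)` are equivalent as soon as `b₁ ≡ b₂ mod gcd(d, N/d)`, both by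
explicit matrices. Hence the cusps are in bijection with the pairs `(d, u)`.
-/

open CongruenceSubgroup

lemma Int.gcd_mul_left_cancel_of_isCoprime {k n : ℤ} (m : ℤ) (h : IsCoprime k n) :
    Int.gcd (k * m) n = Int.gcd m n := by
  rw [Int.isCoprime_iff_gcd_eq_one] at h
  simpa only [Int.gcd, Int.natAbs_mul] using Nat.Coprime.gcd_mul_left_cancel m.natAbs h

lemma Int.exists_add_mul_isCoprime {w m : ℤ} {n : ℕ} (hn : n ≠ 0) (h : IsCoprime w m) :
    ∃ t : ℤ, IsCoprime (w + t * m) n := by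
  rcases eq_or_ne m 0 with rfl | hm
  · exact ⟨0, by simpa using h.of_isCoprime_of_dvd_right (dvd_zero (n : ℤ))⟩
  set M := m.natAbs
  have : NeZero (M * n) := ⟨mul_ne_zero (Int.natAbs_ne_zero.mpr hm) hn⟩
  have hwM : IsCoprime w M := by rwa [Int.natCast_natAbs, IsCoprime.abs_right_iff]
  obtain ⟨U, hU⟩ := ZMod.unitsMap_surjective (dvd_mul_right M n) (ZMod.unitOfIsCoprime w hwM)
  set x : ℤ := (U : ZMod (M * n)).cast
  have hxU : (x : ZMod (M * n)) = U := ZMod.intCast_zmod_cast _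
  have hxw : (x : ZMod M) = w := by
    rw [← ZMod.cast_intCast (dvd_mul_right M n) x, hxU]
    exact congrArg Units.val hU
  obtain ⟨t, ht⟩ : m ∣ x - w :=
    Int.natAbs_dvd.mp ((ZMod.intCast_eq_intCast_iff_dvd_sub _ _ _).mp hxw.symm)
  have hx : IsCoprime ((M * n : ℕ) : ℤ) x :=
    (ZMod.coe_int_isUnit_iff_isCoprime x _).mp (hxU ▸ U.isUnit)
  refine ⟨t, ?_⟩
  rw [show w + t * m = x by linear_combination -ht]
  push_cast at hx
  exact hx.symm.of_mul_right_right

lemma IsCoprime.mul_add_mul_of_det_eq_one {R : Type*} [CommRing R] {a c x y z t : R}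
    (h : IsCoprime a c) (hdet : x * t - y * z = 1) :
    IsCoprime (x * a + y * c) (z * a + t * c) := by
  obtain ⟨p, q, hpq⟩ := h
  exact ⟨p * t - q * z, q * x - p * y, by linear_combination (p * a + q * c) * hdet + hpq⟩

lemma dvd_mul_sub_mul_of_det_eq_one {R : Type*} [CommRing R] {g d n a c x y z t : R}
    (hgd : g ∣ d) (hgn : g ∣ n) (hdet : x * t - y * (d * n * z) = 1) :
    g ∣ (x * a + y * (d * c)) * (n * z * a + t * c) - a * c := by
  have key : (x * a + y * (d * c)) * (n * z * a + t * c) - a * c =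
      n * (x * z * a ^ 2) + d * (y * c * (2 * n * z * a + t * c)) := by
    linear_combination (a * c) * hdet
  rw [key]
  exact dvd_add (dvd_mul_of_dvd_left hgn _) (dvd_mul_of_dvd_left hgd _)

abbrev PrimitiveVector := {v : ℤ × ℤ // IsCoprime v.1 v.2}

variable {N : ℕ}

lemma cuspRel_iff {v w : PrimitiveVector} :
    cuspRel N v w ↔ ∃ x y z t : ℤ, x * t - y * (N * z) = 1 ∧
      x * v.1.1 + y * v.1.2 = w.1.1 ∧ N * z * v.1.1 + t * v.1.2 = w.1.2 := by
  constructor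
  · rintro ⟨γ, hγ, hvw⟩
    obtain ⟨z, hz⟩ : (N : ℤ) ∣ γ 1 0 := (ZMod.intCast_zmod_eq_zero_iff_dvd _ N).mp (Gamma0_mem.mp hγ)
    have h₁ := congrFun hvw 0
    have h₂ := congrFun hvw 1
    simp only [Matrix.mulVec, dotProduct, Fin.sum_univ_two] at h₁ h₂
    refine ⟨γ 0 0, γ 0 1, z, γ 1 1, ?_, by simpa using h₁, by simpa [hz] using h₂⟩
    rw [← hz, ← Matrix.det_fin_two]
    exact γ.2
  · rintro ⟨x, y, z, t, hdet, h₁, h₂⟩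
    refine ⟨⟨!![x, y; N * z, t], by rw [Matrix.det_fin_two_of, hdet]⟩, ?_, ?_⟩
    · exact Gamma0_mem.mpr (by simp)
    · ext i
      fin_cases i <;> simp [Matrix.mulVec, dotProduct, ← h₁, ← h₂]

variable (N) in
abbrev CuspLabel := Σ d : N.divisors, (ZMod (Nat.gcd d (N / d)))ˣ

variable (N) in
lemma card_cuspLabel :
    Nat.card (CuspLabel N) = ∑ d ∈ N.divisors, Nat.totient (Nat.gcd d (N / d)) := by
  rw [Nat.card_sigma, ← Finset.sum_coe_sort N.divisors]
  refine Fintype.sum_congr _ _ fun d ↦ ?_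
  have : NeZero (Nat.gcd d (N / d)) :=
    ⟨(Nat.gcd_pos_of_pos_left _ (Nat.pos_of_mem_divisors d.2)).ne'⟩
  rw [Nat.card_eq_fintype_card, ZMod.card_units_eq_totient]

namespace CuspLabel

def mk (d : N.divisors) (z : ℤ) (hz : IsCoprime z (Nat.gcd d (N / d))) : CuspLabel N :=
  ⟨d, ZMod.unitOfIsCoprime z hz⟩

lemma mk_eq_mk_iff {d d' : N.divisors} {z z' : ℤ} {hz : IsCoprime z (Nat.gcd d (N / d))}
    {hz' : IsCoprime z' (Nat.gcd d' (N / d'))} :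
    mk d z hz = mk d' z' hz' ↔ d = d' ∧ ((Nat.gcd d (N / d) : ℕ) : ℤ) ∣ z' - z := by
  constructor
  · intro h
    obtain rfl : d = d' := congrArg Sigma.fst h
    refine ⟨rfl, (ZMod.intCast_eq_intCast_iff_dvd_sub _ _ _).mp ?_⟩
    exact congrArg Units.val (eq_of_heq (Sigma.mk.inj_iff.mp h).2)
  · rintro ⟨rfl, h⟩
    exact congrArg (Sigma.mk d) (Units.ext ((ZMod.intCast_eq_intCast_iff_dvd_sub _ _ _).mpr h))

lemma exists_mk_eq (d : N.divisors) (u : (ZMod (Nat.gcd d (N / d)))ˣ) :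
    ∃ b : ℤ, IsCoprime b d ∧ ∃ hbg : IsCoprime b (Nat.gcd d (N / d)), mk d b hbg = ⟨d, u⟩ := by
  have : NeZero (d : ℕ) := ⟨(Nat.pos_of_mem_divisors d.2).ne'⟩
  obtain ⟨U, hU⟩ := ZMod.unitsMap_surjective (Nat.gcd_dvd_left d (N / d)) u
  set b : ℤ := (U : ZMod d).cast
  have hbU : (b : ZMod d) = U := ZMod.intCast_zmod_cast _
  have hb : IsCoprime b d := ((ZMod.coe_int_isUnit_iff_isCoprime b _).mp (hbU ▸ U.isUnit)).symm
  have hbg : IsCoprime b (Nat.gcd d (N / d)) :=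
    hb.of_isCoprime_of_dvd_right (by exact_mod_cast Nat.gcd_dvd_left _ _)
  refine ⟨b, hb, hbg, congrArg (Sigma.mk d) (Units.ext ?_)⟩
  rw [ZMod.coe_unitOfIsCoprime, ← ZMod.cast_intCast (Nat.gcd_dvd_left d (N / d)) b, hbU]
  exact congrArg Units.val hU

end CuspLabel

variable (N) in
def cuspDivisor (v : PrimitiveVector) : ℕ := Int.gcd v.1.2 N

variable (N) in
lemma cuspDivisor_dvd (v : PrimitiveVector) : cuspDivisor N v ∣ N := by
  exact_mod_cast Int.gcd_dvd_right v.1.2 N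

lemma cuspDivisor_mem_divisors (hN : N ≠ 0) (v : PrimitiveVector) :
    cuspDivisor N v ∈ N.divisors :=
  Nat.mem_divisors.mpr ⟨cuspDivisor_dvd N v, hN⟩

lemma cuspDivisor_of_dvd {d : ℕ} (hdN : d ∣ N) {b : ℤ} (hb : IsCoprime b d) :
    cuspDivisor N ⟨(b, d), hb⟩ = d := by
  rw [cuspDivisor, Int.gcd_natCast_natCast, Nat.gcd_eq_left hdN]

lemma isCoprime_ediv_cuspDivisor (hN : N ≠ 0) (v : PrimitiveVector) :
    IsCoprime (v.1.2 / cuspDivisor N v) ((N / cuspDivisor N v : ℕ) : ℤ) := by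
  rw [Int.isCoprime_iff_gcd_eq_one, Int.natCast_div]
  exact Int.gcd_ediv_gcd_ediv_gcd_of_ne_zero_right (by exact_mod_cast hN)

lemma isCoprime_cuspResidue (hN : N ≠ 0) (v : PrimitiveVector) :
    IsCoprime (v.1.1 * (v.1.2 / cuspDivisor N v))
      (Nat.gcd (cuspDivisor N v) (N / cuspDivisor N v)) := by
  refine (v.2.of_isCoprime_of_dvd_right ?_).mul_left
    ((isCoprime_ediv_cuspDivisor hN v).of_isCoprime_of_dvd_right ?_)
  · exact (Int.natCast_dvd_natCast.mpr (Nat.gcd_dvd_left _ _)).trans (Int.gcd_dvd_left _ _)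
  · exact Int.natCast_dvd_natCast.mpr (Nat.gcd_dvd_right _ _)

def cuspLabel (hN : N ≠ 0) (v : PrimitiveVector) : CuspLabel N :=
  .mk ⟨cuspDivisor N v, cuspDivisor_mem_divisors hN v⟩ (v.1.1 * (v.1.2 / cuspDivisor N v))
    (isCoprime_cuspResidue hN v)

lemma cuspLabel_of_dvd (hN : N ≠ 0) {d : ℕ} (hdN : d ∣ N) {b : ℤ} (hb : IsCoprime b d) :
    ∃ hbg, cuspLabel hN ⟨(b, d), hb⟩ = .mk ⟨d, Nat.mem_divisors.mpr ⟨hdN, hN⟩⟩ b hbg := by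
  have hd : cuspDivisor N ⟨(b, d), hb⟩ = d := cuspDivisor_of_dvd hdN hb
  have hd0 : (d : ℤ) ≠ 0 := by exact_mod_cast ne_zero_of_dvd_ne_zero hN hdN
  refine ⟨hb.of_isCoprime_of_dvd_right (by exact_mod_cast Nat.gcd_dvd_left _ _), ?_⟩
  rw [cuspLabel, CuspLabel.mk_eq_mk_iff]
  refine ⟨Subtype.ext hd, ?_⟩
  simp [hd, Int.ediv_self hd0]

lemma cuspDivisor_eq_of_cuspRel {v w : PrimitiveVector} (h : cuspRel N v w) :
    cuspDivisor N w = cuspDivisor N v := by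
  obtain ⟨x, y, z, t, hdet, -, hc⟩ := cuspRel_iff.mp h
  have ht : IsCoprime t N := ⟨x, -(y * z), by linear_combination hdet⟩
  rw [cuspDivisor, ← hc, mul_assoc, Int.gcd_mul_left_add_left,
    Int.gcd_mul_left_cancel_of_isCoprime _ ht, cuspDivisor]

lemma cuspLabel_eq_of_cuspRel (hN : N ≠ 0) {v w : PrimitiveVector} (h : cuspRel N v w) :
    cuspLabel hN v = cuspLabel hN w := by
  have hdw := cuspDivisor_eq_of_cuspRel h
  obtain ⟨x, y, z, t, hdet, ha, hc⟩ := cuspRel_iff.mp h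
  have hdN := cuspDivisor_dvd N v
  set d := cuspDivisor N v
  have hd0 : (d : ℤ) ≠ 0 := by exact_mod_cast ne_zero_of_dvd_ne_zero hN hdN
  have hNdn : (N : ℤ) = d * (N / d : ℕ) := by exact_mod_cast (Nat.mul_div_cancel' hdN).symm
  set n : ℤ := ((N / d : ℕ) : ℤ)
  obtain ⟨c₁, hc₁⟩ : (d : ℤ) ∣ v.1.2 := Int.gcd_dvd_left _ _
  have hcv : v.1.2 / d = c₁ := by rw [hc₁, Int.mul_ediv_cancel_left _ hd0]
  have hcw : w.1.2 / d = n * z * v.1.1 + t * c₁ := by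
    rw [← hc, hNdn, hc₁, ← Int.mul_ediv_cancel_left (n * z * v.1.1 + t * c₁) hd0]
    ring_nf
  rw [cuspLabel, cuspLabel, CuspLabel.mk_eq_mk_iff]
  refine ⟨Subtype.ext hdw.symm, ?_⟩
  rw [hdw, hcw, hcv, ← ha, hc₁]
  refine dvd_mul_sub_mul_of_det_eq_one ?_ ?_ (by rw [← hNdn]; exact hdet)
  · exact Int.natCast_dvd_natCast.mpr (Nat.gcd_dvd_left _ _)
  · exact Int.natCast_dvd_natCast.mpr (Nat.gcd_dvd_right _ _)

lemma exists_cuspRel_cuspDivisor (hN : N ≠ 0) (v : PrimitiveVector) {d : ℕ}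
    (hd : cuspDivisor N v = d) : ∃ (b : ℤ) (hb : IsCoprime b d), cuspRel N v ⟨(b, d), hb⟩ := by
  subst hd
  have hdN := cuspDivisor_dvd N v
  set d := cuspDivisor N v
  have hNdn : (N : ℤ) = d * (N / d : ℕ) := by exact_mod_cast (Nat.mul_div_cancel' hdN).symm
  have hc₁n := isCoprime_ediv_cuspDivisor hN v
  set n : ℤ := ((N / d : ℕ) : ℤ)
  obtain ⟨c₁, hc₁⟩ : (d : ℤ) ∣ v.1.2 := Int.gcd_dvd_left _ _
  have hd0 : (d : ℤ) ≠ 0 := by exact_mod_cast ne_zero_of_dvd_ne_zero hN hdN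
  rw [hc₁, Int.mul_ediv_cancel_left _ hd0] at hc₁n
  -- Look for a bottom row `(N z, t)` with `n z a + t c₁ = 1` and `t` prime to `N`: shift a Bézout
  -- solution along `(-c₁, n a)`.
  have hac₁ : IsCoprime v.1.1 c₁ := v.2.of_isCoprime_of_dvd_right ⟨d, by rw [hc₁, mul_comm]⟩
  obtain ⟨z₀, t₀, h₀⟩ := hc₁n.symm.mul_left hac₁
  obtain ⟨s, hs⟩ := Int.exists_add_mul_isCoprime hN
    (⟨c₁, z₀, by linear_combination h₀⟩ : IsCoprime t₀ (n * v.1.1))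
  set z := z₀ - s * c₁
  set t := t₀ + s * (n * v.1.1)
  have hzt : z * (n * v.1.1) + t * c₁ = 1 := by linear_combination h₀
  obtain ⟨p, q, hpq⟩ : IsCoprime (N * z) t :=
    hs.symm.mul_left ⟨n * v.1.1, c₁, by linear_combination hzt⟩
  have hdet : q * t - -p * (N * z) = 1 := by linear_combination hpq
  have hrow : N * z * v.1.1 + t * v.1.2 = d := by
    rw [hNdn, hc₁]
    linear_combination (d : ℤ) * hzt
  exact ⟨_, hrow ▸ v.2.mul_add_mul_of_det_eq_one hdet, cuspRel_iff.mpr ⟨q, -p, z, t, hdet, rfl, hrow⟩⟩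

lemma cuspRel_of_dvd_sub {d : ℕ} (hdN : d ∣ N) {b₁ b₂ : ℤ} (hb₁ : IsCoprime b₁ d)
    (hb₂ : IsCoprime b₂ d) (hg : ((Nat.gcd d (N / d) : ℕ) : ℤ) ∣ b₂ - b₁) :
    cuspRel N ⟨(b₁, d), hb₁⟩ ⟨(b₂, d), hb₂⟩ := by
  have hNdn : (N : ℤ) = d * (N / d : ℕ) := by exact_mod_cast (Nat.mul_div_cancel' hdN).symm
  -- `y d + n z b₁ b₂ = b₂ - b₁` is solvable since `gcd(d, n b₁ b₂) = gcd(d, n)` divides `b₂ - b₁`;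
  -- then `!![1 + n z b₂, y; N z, 1 - n z b₁]` does the job.
  have hbez := Nat.gcd_eq_gcd_ab d (N / d)
  set n : ℤ := ((N / d : ℕ) : ℤ)
  obtain ⟨m, hm⟩ := hg
  obtain ⟨p, q, hpq⟩ := hb₁.mul_left hb₂
  set z := m * Nat.gcdB d (N / d) * p
  set y := m * Nat.gcdA d (N / d) + n * m * Nat.gcdB d (N / d) * q
  have hyz : y * d + n * z * b₁ * b₂ = b₂ - b₁ := by
    linear_combination n * m * Nat.gcdB d (N / d) * hpq - m * hbez - hm
  refine cuspRel_iff.mpr ⟨1 + n * z * b₂, y, z, 1 - n * z * b₁, ?_, ?_, ?_⟩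
  · linear_combination (-(n * z)) * hyz - y * z * hNdn
  · linear_combination hyz
  · linear_combination z * b₁ * hNdn

lemma quot_mk_eq_of_cuspLabel_eq (hN : N ≠ 0) {v w : PrimitiveVector}
    (h : cuspLabel hN v = cuspLabel hN w) : Quot.mk (cuspRel N) v = Quot.mk (cuspRel N) w := by
  have hdN := cuspDivisor_dvd N v
  have hdw : cuspDivisor N w = cuspDivisor N v :=
    (congrArg Subtype.val (CuspLabel.mk_eq_mk_iff.mp h).1).symm
  obtain ⟨b₁, hb₁, hv⟩ := exists_cuspRel_cuspDivisor hN v rfl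
  obtain ⟨b₂, hb₂, hw⟩ := exists_cuspRel_cuspDivisor hN w hdw
  obtain ⟨_, hv'⟩ := cuspLabel_of_dvd hN hdN hb₁
  obtain ⟨_, hw'⟩ := cuspLabel_of_dvd hN hdN hb₂
  have hb := (cuspLabel_eq_of_cuspRel hN hv).symm.trans (h.trans (cuspLabel_eq_of_cuspRel hN hw))
  rw [hv', hw', CuspLabel.mk_eq_mk_iff] at hb
  exact (Quot.sound hv).trans
    ((Quot.sound (cuspRel_of_dvd_sub hdN hb₁ hb₂ hb.2)).trans (Quot.sound hw).symm)

lemma cuspLabel_surjective (hN : N ≠ 0) : Function.Surjective (cuspLabel hN) := by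
  rintro ⟨d, u⟩
  obtain ⟨b, hb, _, hu⟩ := CuspLabel.exists_mk_eq d u
  obtain ⟨_, hl⟩ := cuspLabel_of_dvd hN (Nat.dvd_of_mem_divisors d.2) hb
  exact ⟨_, hl.trans hu⟩

noncomputable def cuspEquivCuspLabel (hN : N ≠ 0) : Quot (cuspRel N) ≃ CuspLabel N :=
  Equiv.ofBijective (Quot.lift (cuspLabel hN) fun _ _ ↦ cuspLabel_eq_of_cuspRel hN)
    ⟨fun p q ↦ Quot.induction_on₂ p q fun _ _ ↦ quot_mk_eq_of_cuspLabel_eq hN,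
      (Quot.surjective_lift _).mpr (cuspLabel_surjective hN)⟩

/-- The number of inequivalent cusps of `Γ₀(N)` equals `∑_{d ∣ N} φ(gcd(d, N/d))`. -/
theorem card_cusps_Gamma0 (N : ℕ) (hN : 1 ≤ N) :
    Nat.card (Quot (cuspRel N)) = ∑ d ∈ N.divisors, Nat.totient (Nat.gcd d (N / d)) := by
  rw [Nat.card_congr (cuspEquivCuspLabel (Nat.one_le_iff_ne_zero.mp hN)), card_cuspLabel]
end
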